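/- arXiv:1711.05846 — 3 statements merged into one kernel-verified Lean document; each statement's English description precedes it below -/
import Mathlib

section
/- Let Q(X,Y,Z) = Y^4 + 5X^4 - 6X^2Y^2 + 6X^3Z + 26X^2YZ + 10XY^2Z - 10Y^3Z - 32X^2Z^2 - 40XYZ^2 + 24Y^2Z^2 + 32XZ^3 - 16YZ^3, viewed with integer coefficients. For every algebraically closed field K whose characteristic is neither 2 nor 13, the only common zero (a,b,c) ∈ K^3 of the three partial derivatives ∂Q/∂X, ∂Q/∂Y, ∂Q/∂Z (coefficients mapped to K via the canonical ring map ℤ → K) is (a,b,c) = (0,0,0). In other words, the plane quartic Q = 0 is smooth in every characteristic different from 2 and 13; in particular X_s(13) has a model with good reduction away from 2 and 13. -/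
/-!
A Nullstellensatz-type certificate exhibits `2⁸ · 13 · Z⁷` as an explicit combination, with
integer coefficients, of the three partial derivatives of `Q`. So when `2` and `13` are invertible
every common zero has `Z = 0`. There the partials become `4 X (5X² - 3Y²)`, `4 Y (Y² - 3X²)` and
`2 (3X³ + 13X²Y + 5XY² - 5Y³)`, whose only common zero is the origin.
-/

open MvPolynomial

/-- The smooth plane quartic model of `X_s(13)`, as a homogeneous quartic with
integer coefficients in variables `X 0, X 1, X 2` (playing the roles of `X, Y, Z`). -/
noncomputable def Qs13Z : MvPolynomial (Fin 3) ℤ :=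
  (X 1)^4 + 5*(X 0)^4 - 6*(X 0)^2*(X 1)^2 + 6*(X 0)^3*(X 2) + 26*(X 0)^2*(X 1)*(X 2)
    + 10*(X 0)*(X 1)^2*(X 2) - 10*(X 1)^3*(X 2) - 32*(X 0)^2*(X 2)^2
    - 40*(X 0)*(X 1)*(X 2)^2 + 24*(X 1)^2*(X 2)^2 + 32*(X 0)*(X 2)^3 - 16*(X 1)*(X 2)^3

@[simp]
theorem Derivation.map_ofNat {R A M : Type*} [CommSemiring R] [CommSemiring A] [AddCommMonoid M]
    [Algebra R A] [Module A M] [Module R M] (D : Derivation R A M) (n : ℕ) [n.AtLeastTwo] :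
    D (no_index (OfNat.ofNat n) : A) = 0 := by
  rw [← Nat.cast_ofNat]
  exact D.map_natCast n

section Gradient

variable {R : Type*} [CommRing R]

def gradQs13 (a b c : R) : Fin 3 → R :=
  ![20*a^3 - 12*a*b^2 + 18*a^2*c + 52*a*b*c + 10*b^2*c - 64*a*c^2 - 40*b*c^2 + 32*c^3,
    -12*a^2*b + 4*b^3 + 26*a^2*c + 20*a*b*c - 30*b^2*c - 40*a*c^2 + 48*b*c^2 - 16*c^3,
    6*a^3 + 26*a^2*b + 10*a*b^2 - 10*b^3 - 64*a^2*c - 80*a*b*c + 48*b^2*c + 96*a*c^2 - 48*b*c^2]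

theorem eval_map_pderiv_Qs13Z (a b c : R) (i : Fin 3) :
    eval ![a, b, c] (map (Int.castRingHom R) (pderiv i Qs13Z)) = gradQs13 a b c i := by
  fin_cases i <;>
  · simp [Qs13Z, gradQs13, pderiv_X]
    ring

theorem two_pow_eight_mul_thirteen_mul_pow_seven_eq_zero {a b c : R}
    (h : ∀ i, gradQs13 a b c i = 0) : (2^8 * 13 : R) * c^7 = 0 := by
  have hX := h 0
  have hY := h 1
  have hZ := h 2
  simp only [gradQs13, Fin.isValue, Matrix.cons_val] at hX hY hZ
  linear_combination
    (42528*c^4 - 80360*b*c^3 - 5370*b^2*c^2 + 26956*b^3*c - 2912*b^4 + 64328*a*c^3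
      + 30910*a*b*c^2 - 21244*a*b^2*c - 1808*a*b^3 - 68712*a^2*c^2 + 18846*a^2*b*c
      + 9179*a^2*b^2 + 13534*a^3*c - 9688*a^3*b - 651*a^4) * hX
    + (84848*c^4 - 65584*b*c^3 - 72052*b^2*c^2 + 58017*b^3*c - 9065*b^4 - 147400*a*c^3
      + 79638*a*b*c^2 + 3825*a*b^2*c - 15516*a*b^3 + 73570*a^2*c^2 - 55887*a^2*b*c
      + 30505*a^2*b^2 + 33481*a^3*c + 48660*a^3*b - 5408*a^4) * hY
    + (17696*c^4 - 4654*b*c^3 - 45967*b^2*c^2 + 30085*b^3*c - 3626*b^4 - 2522*a*c^3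
      + 3144*a*b*c^2 + 9321*a*b^2*c - 6338*a*b^3 + 2127*a^2*c^2 - 11087*a^2*b*c
      + 9484*a^2*b^2 + 3421*a^3*c + 12074*a^3*b + 2170*a^4) * hZ

theorem eq_zero_of_gradQs13_eq_zero [NoZeroDivisors R] (h2 : (2 : R) ≠ 0) (h13 : (13 : R) ≠ 0)
    {a b c : R} (h : ∀ i, gradQs13 a b c i = 0) : a = 0 ∧ b = 0 ∧ c = 0 := by
  have hc : c = 0 := by
    simpa [h2, h13] using two_pow_eight_mul_thirteen_mul_pow_seven_eq_zero h
  subst hc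
  have hX := h 0
  have hY := h 1
  have hZ := h 2
  simp only [gradQs13, Fin.isValue, Matrix.cons_val] at hX hY hZ
  have hb : (2^2 : R) * (b * (b^2 - 3*a^2)) = 0 := by linear_combination hY
  obtain rfl | hb : b = 0 ∨ b^2 - 3*a^2 = 0 := by simpa [h2] using hb
  · have ha : (2 : R) * a^3 = 0 := by linear_combination hX - 3*hZ
    exact ⟨by simpa [h2] using ha, rfl, rfl⟩
  · have ha : (2^4 : R) * a^3 = 0 := by linear_combination -hX - 12*a*hb
    obtain rfl : a = 0 := by simpa [h2] using ha
    simpa using hb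

end Gradient

theorem Xs13_smooth_away_from_2_13_general (K : Type*) [Field K]
    (h2 : ringChar K ≠ 2) (h13 : ringChar K ≠ 13) (a b c : K)
    (h : ∀ i : Fin 3,
      MvPolynomial.eval ![a, b, c]
        (MvPolynomial.map (Int.castRingHom K) (MvPolynomial.pderiv i Qs13Z)) = 0) :
    a = 0 ∧ b = 0 ∧ c = 0 := by
  have h13' : (13 : K) ≠ 0 := by
    exact_mod_cast CharP.cast_ne_zero_of_ne_of_prime K (by norm_num : Nat.Prime 13) h13
  simp only [eval_map_pderiv_Qs13Z] at h
  exact eq_zero_of_gradQs13_eq_zero (Ring.two_ne_zero h2) h13' h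

/-- Over every algebraically closed field of characteristic different from 2 and 13,
the three partial derivatives of the quartic `Q` have no common zero other than the
origin: the plane quartic model of `X_s(13)` is smooth away from 2 and 13. -/
theorem Xs13_smooth_away_from_2_13 (K : Type*) [Field K] [IsAlgClosed K]
    (h2 : ringChar K ≠ 2) (h13 : ringChar K ≠ 13) (a b c : K)
    (h : ∀ i : Fin 3,
      MvPolynomial.eval ![a, b, c]
        (MvPolynomial.map (Int.castRingHom K) (MvPolynomial.pderiv i Qs13Z)) = 0) :
    a = 0 ∧ b = 0 ∧ c = 0 :=
  Xs13_smooth_away_from_2_13_general K h2 h13 a b c h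
end

section
/- Let R be a commutative ring equipped with a derivation d : R → R, extended entrywise to vectors and matrices over R. Let n ≥ 1, let F, Z be n×n matrices over R with dF = 0 and dZ = 0, and let p ∈ R with dp = 0 and F^T·Z·F = p·Z. Let ω, f, g be column vectors in R^n and η, η_φ, h ∈ R satisfy dg^T = df^T·Z·F and dh = ω^T·F^T·Z·f + df^T·Z·f - g^T·ω + η_φ - p·η. Define the (n+2)×(n+2) block matrices Λ = -[[0,0,0],[ω,0,0],[η, ω^T Z, 0]], Λ_φ = -[[0,0,0],[Fω + df,0,0],[η_φ, (Fω + df)^T Z, 0]] (blocks of sizes 1, n, 1), and G = [[1,0,0],[f,F,0],[h,g^T,p]]. Then Λ_φ·G + dG = G·Λ. (This is the gauge-transformation identity defining the Frobenius structure on the universal connection A_Z, where φ*ω = Fω + df and φ*η = η_φ.) -/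
/-
The gauge matrix `G` and both connection matrices are block lower triangular, so both sides
of `Λ_φ G + dG = G Λ` are computed block by block. The diagonal blocks vanish because
`d` kills `1`, `F` and `p`; the block `(2,1)` is `-Fω` on both sides once `φ*ω = Fω + df`
is inserted. The block `(3,2)` is the relation `(Fω)ᵀ Z F = ωᵀ (Fᵀ Z F) = p ωᵀ Z` together
with the equation for `dg`, and the block `(3,1)` is the equation for `dh` after moving `F`
across `Z` in `(Fω + df)ᵀ Z f`.
-/

open Matrix

/-- A `(1 + n + 1) × (1 + n + 1)` block matrix with scalar corner blocks, given by its
nine blocks (of sizes `1`, `n`, `1`). -/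
def blk3 {R : Type*} (n : ℕ)
    (a11 : R) (a12 : Fin n → R) (a13 : R)
    (a21 : Fin n → R) (a22 : Matrix (Fin n) (Fin n) R) (a23 : Fin n → R)
    (a31 : R) (a32 : Fin n → R) (a33 : R) :
    Matrix (Fin 1 ⊕ (Fin n ⊕ Fin 1)) (Fin 1 ⊕ (Fin n ⊕ Fin 1)) R :=
  Matrix.of fun i j =>
    match i, j with
    | Sum.inl _, Sum.inl _ => a11
    | Sum.inl _, Sum.inr (Sum.inl k) => a12 k
    | Sum.inl _, Sum.inr (Sum.inr _) => a13
    | Sum.inr (Sum.inl k), Sum.inl _ => a21 k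
    | Sum.inr (Sum.inl k), Sum.inr (Sum.inl l) => a22 k l
    | Sum.inr (Sum.inl k), Sum.inr (Sum.inr _) => a23 k
    | Sum.inr (Sum.inr _), Sum.inl _ => a31
    | Sum.inr (Sum.inr _), Sum.inr (Sum.inl k) => a32 k
    | Sum.inr (Sum.inr _), Sum.inr (Sum.inr _) => a33

section Blk3

variable {R : Type*} {n : ℕ}

theorem neg_blk3 [Neg R] (a11 : R) (a12 : Fin n → R) (a13 : R)
    (a21 : Fin n → R) (a22 : Matrix (Fin n) (Fin n) R) (a23 : Fin n → R)
    (a31 : R) (a32 : Fin n → R) (a33 : R) :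
    -blk3 n a11 a12 a13 a21 a22 a23 a31 a32 a33
      = blk3 n (-a11) (-a12) (-a13) (-a21) (-a22) (-a23) (-a31) (-a32) (-a33) := by
  ext (i | i | i) (j | j | j) <;> rfl

theorem blk3_add_blk3 [Add R] (a11 : R) (a12 : Fin n → R) (a13 : R)
    (a21 : Fin n → R) (a22 : Matrix (Fin n) (Fin n) R) (a23 : Fin n → R)
    (a31 : R) (a32 : Fin n → R) (a33 : R) (b11 : R) (b12 : Fin n → R) (b13 : R)
    (b21 : Fin n → R) (b22 : Matrix (Fin n) (Fin n) R) (b23 : Fin n → R)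
    (b31 : R) (b32 : Fin n → R) (b33 : R) :
    blk3 n a11 a12 a13 a21 a22 a23 a31 a32 a33 + blk3 n b11 b12 b13 b21 b22 b23 b31 b32 b33
      = blk3 n (a11 + b11) (a12 + b12) (a13 + b13) (a21 + b21) (a22 + b22) (a23 + b23)
          (a31 + b31) (a32 + b32) (a33 + b33) := by
  ext (i | i | i) (j | j | j) <;> rfl

theorem blk3_map {S : Type*} (f : R → S) (a11 : R) (a12 : Fin n → R) (a13 : R)
    (a21 : Fin n → R) (a22 : Matrix (Fin n) (Fin n) R) (a23 : Fin n → R)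
    (a31 : R) (a32 : Fin n → R) (a33 : R) :
    (blk3 n a11 a12 a13 a21 a22 a23 a31 a32 a33).map f
      = blk3 n (f a11) (f ∘ a12) (f a13) (f ∘ a21) (a22.map f) (f ∘ a23)
          (f a31) (f ∘ a32) (f a33) := by
  ext (i | i | i) (j | j | j) <;> rfl

theorem blk3_mul_blk3_of_lowerTriangular [NonUnitalNonAssocSemiring R]
    (a11 : R) (a21 : Fin n → R) (a22 : Matrix (Fin n) (Fin n) R)
    (a31 : R) (a32 : Fin n → R) (a33 : R)
    (b11 : R) (b21 : Fin n → R) (b22 : Matrix (Fin n) (Fin n) R)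
    (b31 : R) (b32 : Fin n → R) (b33 : R) :
    blk3 n a11 0 0 a21 a22 0 a31 a32 a33 * blk3 n b11 0 0 b21 b22 0 b31 b32 b33
      = blk3 n (a11 * b11) 0 0 (fun k => a21 k * b11 + (a22 *ᵥ b21) k) (a22 * b22) 0
          (a31 * b11 + a32 ⬝ᵥ b21 + a33 * b31) (a32 ᵥ* b22 + a33 • b32) (a33 * b33) := by
  ext (i | i | i) (j | j | j) <;>
    simp [blk3, Matrix.mul_apply, Fintype.sum_sum_type, mulVec, vecMul, dotProduct, add_assoc]

end Blk3

section Leibniz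

variable {R : Type*} {d : R → R}

theorem map_zero_of_leibniz [NonUnitalNonAssocSemiring R]
    (hd_mul : ∀ a b : R, d (a * b) = a * d b + d a * b) : d 0 = 0 := by
  simpa using hd_mul 0 0

theorem map_one_of_leibniz [NonAssocRing R]
    (hd_mul : ∀ a b : R, d (a * b) = a * d b + d a * b) : d 1 = 0 := by
  simpa using hd_mul 1 1

end Leibniz

section Pullback

variable {R : Type*} [CommRing R] {n : ℕ}

theorem mulVec_vecMul_vecMul_eq_smul_vecMul {F Z : Matrix (Fin n) (Fin n) R} {p : R}
    (hFZF : Fᵀ * Z * F = p • Z) (ω : Fin n → R) : (F *ᵥ ω) ᵥ* Z ᵥ* F = p • (ω ᵥ* Z) := by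
  rw [← vecMul_transpose, vecMul_vecMul, vecMul_vecMul, ← Matrix.mul_assoc, hFZF, vecMul_smul]

theorem mulVec_dotProduct_mulVec (F Z : Matrix (Fin n) (Fin n) R) (ω f : Fin n → R) :
    (F *ᵥ ω) ⬝ᵥ (Z *ᵥ f) = ω ⬝ᵥ (Fᵀ * Z) *ᵥ f := by
  rw [← vecMul_transpose, ← dotProduct_mulVec, mulVec_mulVec]

theorem sum_sum_mul_mul_eq_vecMul_vecMul (v : Fin n → R) (Z F : Matrix (Fin n) (Fin n) R)
    (k : Fin n) : ∑ i, ∑ j, v i * Z i j * F j k = (v ᵥ* Z ᵥ* F) k := by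
  simp only [vecMul, dotProduct, Finset.sum_mul]
  exact Finset.sum_comm

end Pullback

theorem frobenius_structure_gauge_identity_general {R : Type*} [CommRing R]
    (d : R → R)
    (hd_mul : ∀ a b : R, d (a * b) = a * d b + d a * b)
    (n : ℕ)
    (F Z : Matrix (Fin n) (Fin n) R)
    (hdF : ∀ i j, d (F i j) = 0)
    (p : R) (hdp : d p = 0)
    (hFZF : Fᵀ * Z * F = p • Z)
    (ω f g : Fin n → R) (η ηφ h : R)
    (hg : ∀ k, d (g k) = ∑ i, ∑ j, d (f i) * Z i j * F j k)
    (hh : d h = ω ⬝ᵥ (Fᵀ * Z).mulVec f + (fun i => d (f i)) ⬝ᵥ Z.mulVec f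
            - g ⬝ᵥ ω + ηφ - p * η) :
    let φω : Fin n → R := fun k => F.mulVec ω k + d (f k)
    let Λ := -(blk3 n 0 (fun _ => 0) 0 ω 0 (fun _ => 0) η (fun k => ∑ l, ω l * Z l k) 0)
    let Λφ := -(blk3 n 0 (fun _ => 0) 0 φω 0 (fun _ => 0) ηφ
                  (fun k => ∑ l, φω l * Z l k) 0)
    let G := blk3 n 1 (fun _ => 0) 0 f F (fun _ => 0) h g p
    Λφ * G + Matrix.of (fun i j => d (G i j)) = G * Λ := by
  intro φω Λ Λφ G
  change Λφ * G + G.map d = G * Λ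
  have hφω : φω = F *ᵥ ω + d ∘ f := rfl
  have hd_zero : d 0 = 0 := map_zero_of_leibniz hd_mul
  have hdF' : F.map d = 0 := Matrix.ext hdF
  have hdg : d ∘ g = (d ∘ f) ᵥ* Z ᵥ* F :=
    funext fun k => (hg k).trans (sum_sum_mul_mul_eq_vecMul_vecMul _ Z F k)
  have hφω_pullback : φω ᵥ* Z ᵥ* F = p • (ω ᵥ* Z) + (d ∘ f) ᵥ* Z ᵥ* F := by
    rw [hφω, add_vecMul, add_vecMul, mulVec_vecMul_vecMul_eq_smul_vecMul hFZF]
  have hφω_pairing : (φω ᵥ* Z) ⬝ᵥ f = ω ⬝ᵥ (Fᵀ * Z) *ᵥ f + (d ∘ f) ⬝ᵥ Z *ᵥ f := by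
    rw [← dotProduct_mulVec, hφω, add_dotProduct, mulVec_dotProduct_mulVec]
  have hzero : (fun _ => 0 : Fin n → R) = 0 := rfl
  have hφωZ : (fun k => ∑ l, φω l * Z l k) = φω ᵥ* Z := rfl
  have hωZ : (fun k => ∑ l, ω l * Z l k) = ω ᵥ* Z := rfl
  simp only [Λ, Λφ, G, hzero, hφωZ, hωZ, neg_blk3, neg_zero, blk3_map,
    blk3_mul_blk3_of_lowerTriangular, blk3_add_blk3]
  congr 1
  · simp [map_one_of_leibniz hd_mul]
  · ext; simp [hd_zero]
  · simp [hd_zero]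
  · ext k; simp [hφω, mulVec_neg]
  · simp [hdF']
  · ext; simp [hd_zero]
  · rw [hh, neg_dotProduct, hφω_pairing, dotProduct_neg]
    simp only [mul_one, zero_mul, mul_zero, Function.comp_def]
    ring
  · rw [neg_vecMul, hφω_pullback, hdg]
    simp
  · simp [hdp]

/-- The gauge-transformation identity `Λ_φ·G + dG = G·Λ` defining the Frobenius
structure on the universal connection `A_Z`, where `φ*ω = Fω + df`, `φ*η = η_φ`,
`F^T·Z·F = p·Z`, `dg^T = df^T·Z·F` and
`dh = ω^T F^T Z f + df^T Z f - g^T ω + η_φ - p·η`. -/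
theorem frobenius_structure_gauge_identity {R : Type*} [CommRing R]
    (d : R → R) (hd_add : ∀ a b : R, d (a + b) = d a + d b)
    (hd_mul : ∀ a b : R, d (a * b) = a * d b + d a * b)
    (n : ℕ) (hn : 1 ≤ n)
    (F Z : Matrix (Fin n) (Fin n) R)
    (hdF : ∀ i j, d (F i j) = 0) (hdZ : ∀ i j, d (Z i j) = 0)
    (p : R) (hdp : d p = 0)
    (hFZF : Fᵀ * Z * F = p • Z)
    (ω f g : Fin n → R) (η ηφ h : R)
    (hg : ∀ k, d (g k) = ∑ i, ∑ j, d (f i) * Z i j * F j k)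
    (hh : d h = ω ⬝ᵥ (Fᵀ * Z).mulVec f + (fun i => d (f i)) ⬝ᵥ Z.mulVec f
            - g ⬝ᵥ ω + ηφ - p * η) :
    let φω : Fin n → R := fun k => F.mulVec ω k + d (f k)
    let Λ := -(blk3 n 0 (fun _ => 0) 0 ω 0 (fun _ => 0) η (fun k => ∑ l, ω l * Z l k) 0)
    let Λφ := -(blk3 n 0 (fun _ => 0) 0 φω 0 (fun _ => 0) ηφ
                  (fun k => ∑ l, φω l * Z l k) 0)
    let G := blk3 n 1 (fun _ => 0) 0 f F (fun _ => 0) h g p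
    Λφ * G + Matrix.of (fun i j => d (G i j)) = G * Λ :=
  frobenius_structure_gauge_identity_general d hd_mul n F Z hdF p hdp hFZF ω f g η ηφ h hg hh
end

section
/- Let p be a prime and define the formal integration operator ∫ on power series over ℚ_p by ∫(Σ_{k≥0} a_k t^k) = Σ_{k≥0} a_k t^{k+1}/(k+1). If F, H ∈ ℚ_p⟦t⟧ have all coefficients of p-adic valuation ≥ 0, then for every n ≥ 1: (i) the n-th coefficient of ∫F has p-adic valuation ≥ -⌊log_p(n)⌋, and (ii) the n-th coefficient of the iterated integral ∫(F · ∫H) has p-adic valuation ≥ -2·⌊log_p(n)⌋. -/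
/-!
Dividing by `n` costs at most `p ^ v_p(n) ≤ p ^ ⌊log_p n⌋` in norm, which gives (i). For (ii), the
ultrametric inequality bounds every coefficient of index `< n` of `F · ∫H` by the largest
loss `p ^ ⌊log_p n⌋` suffered in `∫H`, and the outer integral loses that factor once more.
-/

/-- The formal integration operator on power series:
`∫(Σ a_k t^k) = Σ a_k t^(k+1)/(k+1)`. -/
noncomputable def formalInt {p : ℕ} [Fact p.Prime] (F : PowerSeries ℚ_[p]) :
    PowerSeries ℚ_[p] :=
  PowerSeries.mk fun n => if n = 0 then 0 else PowerSeries.coeff (R := ℚ_[p]) (n - 1) F / n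

open PowerSeries

lemma PowerSeries.norm_coeff_mul_le_of_le {R : Type*} [NormedRing R] [IsUltrametricDist R]
    {F G : PowerSeries R} {m : ℕ} {a b : ℝ} (hF : ∀ i ≤ m, ‖coeff i F‖ ≤ a)
    (hG : ∀ j ≤ m, ‖coeff j G‖ ≤ b) : ‖coeff m (F * G)‖ ≤ a * b := by
  have ha : 0 ≤ a := (norm_nonneg _).trans (hF 0 m.zero_le)
  have hb : 0 ≤ b := (norm_nonneg _).trans (hG 0 m.zero_le)
  rw [coeff_mul]
  refine IsUltrametricDist.norm_sum_le_of_forall_le_of_nonneg (mul_nonneg ha hb) ?_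
  rintro ⟨i, j⟩ hij
  rw [Finset.HasAntidiagonal.mem_antidiagonal] at hij
  calc ‖coeff i F * coeff j G‖ ≤ ‖coeff i F‖ * ‖coeff j G‖ := norm_mul_le _ _
    _ ≤ a * b := mul_le_mul (hF i (by omega)) (hG j (by omega)) (norm_nonneg _) ha

section

variable {p : ℕ} [Fact p.Prime]

lemma Padic.norm_natCast_inv_le_pow_log (n : ℕ) :
    ‖(n : ℚ_[p])‖⁻¹ ≤ (p : ℝ) ^ Nat.log p n := by
  rcases Nat.eq_zero_or_pos n with rfl | hn
  · simp
  rw [Padic.norm_eq_zpow_neg_valuation (Nat.cast_ne_zero.mpr hn.ne'), Padic.valuation_natCast,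
    ← zpow_neg, neg_neg, ← zpow_natCast]
  exact zpow_le_zpow_right₀ (mod_cast (Fact.out : p.Prime).one_le)
    (mod_cast padicValNat_le_nat_log n)

lemma coeff_formalInt (G : PowerSeries ℚ_[p]) (n : ℕ) :
    coeff (n + 1) (formalInt G) = coeff n G / (n + 1 : ℕ) := by
  simp [formalInt]

lemma coeff_zero_formalInt (G : PowerSeries ℚ_[p]) : coeff 0 (formalInt G) = 0 := by
  simp [formalInt]

lemma norm_coeff_formalInt_le (G : PowerSeries ℚ_[p]) (n : ℕ) :
    ‖coeff n (formalInt G)‖ ≤ ‖coeff (n - 1) G‖ * (p : ℝ) ^ Nat.log p n := by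
  rcases n with _ | n
  · simp [coeff_zero_formalInt]
  rw [coeff_formalInt, norm_div, div_eq_mul_inv, Nat.add_sub_cancel]
  gcongr
  exact Padic.norm_natCast_inv_le_pow_log _

lemma norm_coeff_formalInt_le_pow_log {G : PowerSeries ℚ_[p]} (hG : ∀ k, ‖coeff k G‖ ≤ 1)
    (n : ℕ) : ‖coeff n (formalInt G)‖ ≤ (p : ℝ) ^ Nat.log p n :=
  (norm_coeff_formalInt_le G n).trans (mul_le_of_le_one_left (by positivity) (hG _))

end

/-- If `F` and `H` have `p`-adically integral coefficients, then for `n ≥ 1` the `n`-th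
coefficient of `∫F` has valuation `≥ -⌊log_p n⌋` (norm `≤ p^⌊log_p n⌋`), and the `n`-th
coefficient of the double integral `∫(F·∫H)` has valuation `≥ -2⌊log_p n⌋`
(norm `≤ p^(2⌊log_p n⌋)`). -/
theorem coleman_integral_coefficient_bounds (p : ℕ) [Fact p.Prime]
    (F H : PowerSeries ℚ_[p])
    (hF : ∀ k, ‖PowerSeries.coeff (R := ℚ_[p]) k F‖ ≤ 1)
    (hH : ∀ k, ‖PowerSeries.coeff (R := ℚ_[p]) k H‖ ≤ 1) :
    ∀ n : ℕ, 1 ≤ n →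
      ‖PowerSeries.coeff (R := ℚ_[p]) n (formalInt F)‖ ≤ (p : ℝ) ^ (Nat.log p n) ∧
      ‖PowerSeries.coeff (R := ℚ_[p]) n (formalInt (F * formalInt H))‖
        ≤ (p : ℝ) ^ (2 * Nat.log p n) := by
  intro n _
  refine ⟨norm_coeff_formalInt_le_pow_log hF n, ?_⟩
  have hp : (1 : ℝ) ≤ p := mod_cast (Fact.out : p.Prime).one_le
  have hInt : ∀ j ≤ n - 1, ‖coeff j (formalInt H)‖ ≤ (p : ℝ) ^ Nat.log p n := fun j hj =>
    (norm_coeff_formalInt_le_pow_log hH j).trans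
      (pow_le_pow_right₀ hp (Nat.log_mono_right (by omega)))
  have hProd : ‖coeff (n - 1) (F * formalInt H)‖ ≤ 1 * (p : ℝ) ^ Nat.log p n :=
    norm_coeff_mul_le_of_le (fun i _ => hF i) hInt
  calc ‖coeff n (formalInt (F * formalInt H))‖
      ≤ ‖coeff (n - 1) (F * formalInt H)‖ * (p : ℝ) ^ Nat.log p n := norm_coeff_formalInt_le _ n
    _ ≤ 1 * (p : ℝ) ^ Nat.log p n * (p : ℝ) ^ Nat.log p n := by gcongr
    _ = (p : ℝ) ^ (2 * Nat.log p n) := by ring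
end
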